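/- Vanishing-order decay of the weighted L² norm (Lemma on H(τ)): let v : ℝⁿ × (-T,∞) → ℝ satisfy |v(x,t)| ≤ B₀ e^{A|x|²} for t ∈ [-T₀,0], and suppose |v(x,t)| ≤ C₀(|x|^{2K} + |t|^K) whenever |x|² + |t| ≤ T₁, where K is a positive integer. Then there is T₀ = ½ min{log(1+1/(8(A+π))), T₁} and a constant C₁ depending on n, K, B₀, C₀ such that for all 0 < τ < T₀, ∫_{ℝⁿ} v(x,-τ)² M(x,-τ) dγ(x) ≤ C₁ τ^{2K}. -/

import Mathlib

open MeasureTheory Real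

noncomputable def gaussDensity (n : ℕ) (x : EuclideanSpace ℝ (Fin n)) : ℝ :=
  (2 * Real.pi) ^ (-(n : ℝ) / 2) * Real.exp (-‖x‖ ^ 2 / 2)

noncomputable def backwardMehler (n : ℕ) (x : EuclideanSpace ℝ (Fin n)) (t : ℝ) : ℝ :=
  (1 - Real.exp (2 * t)) ^ (-(n : ℝ) / 2) *
    Real.exp (-(1 / 2) * (Real.exp (2 * t) * ‖x‖ ^ 2) / (1 - Real.exp (2 * t)))

/-!
For `τ > 0` and `s = e^{2τ} - 1`, the weight `M(x,-τ) dγ(x)` is at most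
`(2π(1 - e^{-2τ}))^{-n/2} e^{-|x|²/(2s)}`, a Gaussian of width `s ≤ 4τ`, far narrower than the
growth `e^{A|x|²}` allowed for `v` because `8As ≤ 1`. Split space at `|x|² = T₁/2`: near the
origin the vanishing hypothesis gives `v² ≤ 2C₀²(|x|^{4K} + τ^{2K})`; far from it half of the
Gaussian absorbs `e^{2A|x|²}`, and `1 ≤ (2|x|²/T₁)^{2K}` makes that bound polynomial as well.
Against a quarter of the Gaussian each `|x|^{4K}` costs only `(2K)! (8s)^{2K} = O(τ^{2K})`, and the
remaining Gaussian integrates against the prefactor to `(4e^{2τ})^{n/2} ≤ 8^{n/2}`.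
-/

theorem integral_le_mul_of_le_mul_exp_neg_mul_sq_norm {V : Type*} [NormedAddCommGroup V]
    [InnerProductSpace ℝ V] [FiniteDimensional ℝ V] [MeasurableSpace V] [BorelSpace V]
    {f : V → ℝ} {Q b : ℝ} (hb : 0 < b) (hf₀ : 0 ≤ f)
    (hf : ∀ x, f x ≤ Q * rexp (-b * ‖x‖ ^ 2)) :
    ∫ x, f x ≤ Q * (π / b) ^ (Module.finrank ℝ V / 2 : ℝ) := by
  have hgauss := GaussianFourier.integral_rexp_neg_mul_sq_norm (V := V) hb
  have hint : Integrable fun x : V ↦ rexp (-b * ‖x‖ ^ 2) :=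
    .of_integral_ne_zero (hgauss ▸ (by positivity))
  calc ∫ x, f x ≤ ∫ x, Q * rexp (-b * ‖x‖ ^ 2) :=
        integral_mono_of_nonneg (.of_forall hf₀) (hint.const_mul Q) (.of_forall hf)
    _ = Q * (π / b) ^ (Module.finrank ℝ V / 2 : ℝ) := by rw [integral_const_mul, hgauss]

theorem pow_mul_exp_neg_mul_le {r c : ℝ} (hr : 0 ≤ r) (hc : 0 < c) (m : ℕ) :
    r ^ m * rexp (-(c * r)) ≤ m.factorial / c ^ m := by
  have h := pow_div_factorial_le_exp _ (mul_nonneg hc.le hr) m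
  rw [div_le_iff₀ (by positivity), mul_pow] at h
  rw [le_div_iff₀ (by positivity), exp_neg]
  calc r ^ m * (rexp (c * r))⁻¹ * c ^ m = c ^ m * r ^ m / rexp (c * r) := by ring
    _ ≤ m.factorial := by rw [div_le_iff₀ (exp_pos _)]; linarith

theorem backwardMehler_neg (n : ℕ) (x : EuclideanSpace ℝ (Fin n)) {τ : ℝ} (hτ : 0 < τ) :
    backwardMehler n x (-τ) =
      (1 - rexp (-(2 * τ))) ^ (-(n : ℝ) / 2) *
        rexp (-(‖x‖ ^ 2 / (2 * (rexp (2 * τ) - 1)))) := by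
  have hE : 1 < rexp (2 * τ) := one_lt_exp_iff.mpr (by linarith)
  rw [backwardMehler, show 2 * -τ = -(2 * τ) by ring, exp_neg]
  congr 2
  field_simp

theorem exp_sub_one_le_mul_exp (x : ℝ) : rexp x - 1 ≤ x * rexp x := by
  have h := mul_le_mul_of_nonneg_left (one_sub_le_exp_neg x) (exp_pos x).le
  rw [← exp_add, add_neg_cancel, exp_zero] at h
  linarith

theorem pow_mul_exp_neg_two_mul_le {r c : ℝ} (hr : 0 ≤ r) (hc : 0 < c) (m : ℕ) :
    r ^ m * rexp (-(2 * c * r)) ≤ m.factorial / c ^ m * rexp (-(c * r)) := by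
  have h : rexp (-(2 * c * r)) = rexp (-(c * r)) * rexp (-(c * r)) := by
    rw [← exp_add]; ring_nf
  rw [h, ← mul_assoc]
  exact mul_le_mul_of_nonneg_right (pow_mul_exp_neg_mul_le hr hc m) (exp_pos _).le

theorem sq_le_two_mul_sq_mul_add {w C a b : ℝ} (h : |w| ≤ C * (a + b)) :
    w ^ 2 ≤ 2 * C ^ 2 * (a ^ 2 + b ^ 2) := by
  have h2 := pow_le_pow_left₀ (abs_nonneg w) h 2
  rw [sq_abs] at h2
  nlinarith [sq_nonneg (C * (a - b))]

theorem sq_le_sq_mul_exp {w B A r : ℝ} (h : |w| ≤ B * rexp (A * r)) :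
    w ^ 2 ≤ B ^ 2 * rexp (2 * A * r) := by
  have h2 := pow_le_pow_left₀ (abs_nonneg w) h 2
  rwa [sq_abs, mul_pow, ← exp_nat_mul, ← mul_assoc, Nat.cast_ofNat] at h2

theorem sq_mul_exp_neg_le_poly_mul_exp {w r τ c A B C T : ℝ} (K : ℕ) (hr : 0 ≤ r)
    (hτ : 0 ≤ τ) (hT : 0 < T) (hc : 0 ≤ c) (hAc : A ≤ c)
    (hsmall : r ≤ T → |w| ≤ C * (r ^ K + τ ^ K)) (hlarge : |w| ≤ B * rexp (A * r)) :
    w ^ 2 * rexp (-(4 * c * r)) ≤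
      ((2 * C ^ 2 + B ^ 2 / T ^ (2 * K)) * r ^ (2 * K) + 2 * C ^ 2 * τ ^ (2 * K)) *
        rexp (-(2 * c * r)) := by
  rcases le_or_gt r T with hrT | hTr
  · have hw := sq_le_two_mul_sq_mul_add (hsmall hrT)
    rw [← pow_mul, ← pow_mul, mul_comm K 2] at hw
    have hexp : rexp (-(4 * c * r)) ≤ rexp (-(2 * c * r)) :=
      exp_le_exp.mpr (by nlinarith)
    have : 0 ≤ B ^ 2 / T ^ (2 * K) * r ^ (2 * K) := by positivity
    calc w ^ 2 * rexp (-(4 * c * r)) ≤ (2 * C ^ 2 * (r ^ (2 * K) + τ ^ (2 * K))) *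
          rexp (-(2 * c * r)) := mul_le_mul hw hexp (exp_pos _).le (by positivity)
      _ ≤ _ := by gcongr; linarith
  · have hw := sq_le_sq_mul_exp hlarge
    have hexp : rexp (2 * A * r) * rexp (-(4 * c * r)) ≤ rexp (-(2 * c * r)) := by
      rw [← exp_add]; exact exp_le_exp.mpr (by nlinarith)
    have hpow : 1 ≤ r ^ (2 * K) / T ^ (2 * K) := by
      rw [← div_pow]; exact one_le_pow₀ ((one_le_div hT).mpr hTr.le)
    calc w ^ 2 * rexp (-(4 * c * r)) ≤ B ^ 2 * rexp (2 * A * r) * rexp (-(4 * c * r)) :=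
          mul_le_mul_of_nonneg_right hw (exp_pos _).le
      _ ≤ B ^ 2 * rexp (-(2 * c * r)) := by rw [mul_assoc]; gcongr
      _ ≤ B ^ 2 * (r ^ (2 * K) / T ^ (2 * K)) * rexp (-(2 * c * r)) := by
          gcongr; exact le_mul_of_one_le_right (sq_nonneg B) hpow
      _ = B ^ 2 / T ^ (2 * K) * r ^ (2 * K) * rexp (-(2 * c * r)) := by ring
      _ ≤ _ := by
          gcongr
          linarith [show 0 ≤ C ^ 2 * r ^ (2 * K) by positivity,
            show 0 ≤ C ^ 2 * τ ^ (2 * K) by positivity]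

theorem sq_mul_exp_neg_le_const_mul_exp {w r τ c A B C T : ℝ} (K : ℕ) (hr : 0 ≤ r)
    (hτ : 0 ≤ τ) (hT : 0 < T) (hc : 0 < c) (hAc : A ≤ c)
    (hsmall : r ≤ T → |w| ≤ C * (r ^ K + τ ^ K)) (hlarge : |w| ≤ B * rexp (A * r)) :
    w ^ 2 * rexp (-(4 * c * r)) ≤
      ((2 * C ^ 2 + B ^ 2 / T ^ (2 * K)) * ((2 * K).factorial / c ^ (2 * K)) +
        2 * C ^ 2 * τ ^ (2 * K)) * rexp (-(c * r)) := by
  have hexp : rexp (-(2 * c * r)) ≤ rexp (-(c * r)) := exp_le_exp.mpr (by nlinarith)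
  calc w ^ 2 * rexp (-(4 * c * r))
      ≤ (2 * C ^ 2 + B ^ 2 / T ^ (2 * K)) * (r ^ (2 * K) * rexp (-(2 * c * r))) +
          2 * C ^ 2 * τ ^ (2 * K) * rexp (-(2 * c * r)) := by
        have := sq_mul_exp_neg_le_poly_mul_exp K hr hτ hT hc.le hAc hsmall hlarge
        linarith
    _ ≤ (2 * C ^ 2 + B ^ 2 / T ^ (2 * K)) *
            ((2 * K).factorial / c ^ (2 * K) * rexp (-(c * r))) +
          2 * C ^ 2 * τ ^ (2 * K) * rexp (-(c * r)) := by
        have hpow := pow_mul_exp_neg_two_mul_le hr hc (2 * K)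
        gcongr _ * ?_ + _ * ?_
    _ = _ := by ring

theorem mul_exp_sub_one_lt_of_lt_log {a x : ℝ} (ha : 0 < a) (hx : x < log (1 + 1 / a)) :
    a * (rexp x - 1) < 1 := by
  have h := (exp_lt_exp.mpr hx).trans_eq (exp_log (by positivity))
  rw [← lt_div_iff₀' ha]
  linarith

theorem mehler_prefactor_mul_gaussian_mass {x : ℝ} (hx : 0 < x) (k : ℝ) :
    (2 * π * (1 - rexp (-x))) ^ (-k) * (π / (8 * (rexp x - 1))⁻¹) ^ k = (4 * rexp x) ^ k := by
  have hE : 1 < rexp x := one_lt_exp_iff.mpr hx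
  have hE' : rexp (-x) < 1 := exp_lt_one_iff.mpr (by linarith)
  rw [rpow_neg (by nlinarith [pi_pos]), ← div_eq_inv_mul,
    ← div_rpow (by positivity) (by nlinarith [pi_pos])]
  congr 1
  have hne : rexp x - 1 ≠ 0 := by linarith
  rw [exp_neg]
  field_simp
  ring

theorem backwardMehler_mul_gaussDensity_le (n : ℕ) (x : EuclideanSpace ℝ (Fin n)) {τ : ℝ}
    (hτ : 0 < τ) :
    backwardMehler n x (-τ) * gaussDensity n x ≤
      (2 * π * (1 - rexp (-(2 * τ)))) ^ (-(n : ℝ) / 2) *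
        rexp (-(‖x‖ ^ 2 / (2 * (rexp (2 * τ) - 1)))) := by
  have hE : 0 ≤ 1 - rexp (-(2 * τ)) := by
    linarith [exp_lt_one_iff.mpr (show -(2 * τ) < 0 by linarith)]
  have hgauss : rexp (-‖x‖ ^ 2 / 2) ≤ 1 := exp_le_one_iff.mpr (by nlinarith [norm_nonneg x])
  rw [backwardMehler_neg n x hτ, gaussDensity, mul_rpow (by positivity) hE]
  calc _ = (2 * π) ^ (-(n : ℝ) / 2) * (1 - rexp (-(2 * τ))) ^ (-(n : ℝ) / 2) *
        rexp (-(‖x‖ ^ 2 / (2 * (rexp (2 * τ) - 1)))) * rexp (-‖x‖ ^ 2 / 2) := by ring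
    _ ≤ _ := mul_le_of_le_one_right (by positivity) hgauss

theorem backwardMehler_nonneg (n : ℕ) (x : EuclideanSpace ℝ (Fin n)) {t : ℝ} (ht : t ≤ 0) :
    0 ≤ backwardMehler n x t :=
  mul_nonneg (rpow_nonneg (by linarith [exp_le_one_iff.mpr (by linarith : 2 * t ≤ 0)]) _)
    (exp_pos _).le

theorem gaussDensity_nonneg (n : ℕ) (x : EuclideanSpace ℝ (Fin n)) :
    0 ≤ gaussDensity n x := by
  unfold gaussDensity; positivity

theorem integral_sq_mul_backwardMehler_mul_gaussDensity_le (n K : ℕ)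
    {u : EuclideanSpace ℝ (Fin n) → ℝ} {τ A B C T : ℝ} (hτ : 0 < τ) (hT : 0 < T)
    (hA : 8 * A * (rexp (2 * τ) - 1) ≤ 1)
    (hsmall : ∀ x, ‖x‖ ^ 2 ≤ T → |u x| ≤ C * (‖x‖ ^ (2 * K) + τ ^ K))
    (hlarge : ∀ x, |u x| ≤ B * rexp (A * ‖x‖ ^ 2)) :
    ∫ x, u x ^ 2 * backwardMehler n x (-τ) * gaussDensity n x ≤
      (4 * rexp (2 * τ)) ^ ((n : ℝ) / 2) *
        ((2 * C ^ 2 + B ^ 2 / T ^ (2 * K)) *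
            ((2 * K).factorial * (8 * (rexp (2 * τ) - 1)) ^ (2 * K)) +
          2 * C ^ 2 * τ ^ (2 * K)) := by
  set s := rexp (2 * τ) - 1 with hs_def
  have hs : 0 < s := by rw [hs_def, sub_pos, one_lt_exp_iff]; linarith
  set c := (8 * s)⁻¹ with hc_def
  have hc : 0 < c := by positivity
  have hAc : A ≤ c := by rw [hc_def, ← one_div, le_div_iff₀ (by positivity)]; linarith
  set P := (2 * π * (1 - rexp (-(2 * τ)))) ^ (-(n : ℝ) / 2) with hP_def
  have hP : 0 ≤ P := rpow_nonneg (mul_nonneg (by positivity)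
    (by linarith [exp_le_one_iff.mpr (by linarith : -(2 * τ) ≤ 0)])) _
  set Q := (2 * C ^ 2 + B ^ 2 / T ^ (2 * K)) * ((2 * K).factorial / c ^ (2 * K)) +
    2 * C ^ 2 * τ ^ (2 * K) with hQ
  have hpt : ∀ x, u x ^ 2 * backwardMehler n x (-τ) * gaussDensity n x ≤
      P * Q * rexp (-c * ‖x‖ ^ 2) := fun x ↦ by
    have hw := sq_mul_exp_neg_le_const_mul_exp K (sq_nonneg ‖x‖) hτ.le hT hc hAc
      (fun hx ↦ pow_mul ‖x‖ 2 K ▸ hsmall x hx) (hlarge x)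
    have hrate : ‖x‖ ^ 2 / (2 * s) = 4 * c * ‖x‖ ^ 2 := by rw [hc_def]; field_simp; ring
    have hM := backwardMehler_mul_gaussDensity_le n x hτ
    rw [← hs_def, hrate] at hM
    calc u x ^ 2 * backwardMehler n x (-τ) * gaussDensity n x
        ≤ u x ^ 2 * (P * rexp (-(4 * c * ‖x‖ ^ 2))) := by rw [mul_assoc]; gcongr
      _ = P * (u x ^ 2 * rexp (-(4 * c * ‖x‖ ^ 2))) := by ring
      _ ≤ P * (Q * rexp (-(c * ‖x‖ ^ 2))) := by gcongr
      _ = _ := by ring_nf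
  have hf₀ : ∀ x, 0 ≤ u x ^ 2 * backwardMehler n x (-τ) * gaussDensity n x := fun x ↦
    mul_nonneg (mul_nonneg (sq_nonneg _) (backwardMehler_nonneg n x (by linarith)))
      (gaussDensity_nonneg n x)
  calc (∫ x, u x ^ 2 * backwardMehler n x (-τ) * gaussDensity n x)
      ≤ P * Q * (π / c) ^ ((n : ℝ) / 2) := by
        simpa using integral_le_mul_of_le_mul_exp_neg_mul_sq_norm hc hf₀ hpt
    _ = (4 * rexp (2 * τ)) ^ ((n : ℝ) / 2) * Q := by
        rw [mul_right_comm, hP_def, neg_div, mehler_prefactor_mul_gaussian_mass (by linarith)]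
    _ = _ := by rw [hQ, hc_def, inv_pow, div_inv_eq_mul]

theorem vanishing_order_H_bound_general (n : ℕ) (T₁ A B₀ C₀ : ℝ) (K : ℕ)
    (hT₁ : 0 < T₁) (hA : 0 < A)
    (hC₀ : 0 < C₀)
    (v : EuclideanSpace ℝ (Fin n) → ℝ → ℝ)
    (hgrowth : ∀ x, ∀ t ∈ Set.Icc (-(1 / 2 * min (Real.log (1 + 1 / (8 * (A + Real.pi)))) T₁)) 0,
      |v x t| ≤ B₀ * Real.exp (A * ‖x‖ ^ 2))
    (hvanish : ∀ x t, ‖x‖ ^ 2 + |t| ≤ T₁ → |v x t| ≤ C₀ * (‖x‖ ^ (2 * K) + |t| ^ K)) :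
    ∃ C₁ > 0, ∀ τ : ℝ, 0 < τ →
      τ < 1 / 2 * min (Real.log (1 + 1 / (8 * (A + Real.pi)))) T₁ →
      (∫ x, v x (-τ) ^ 2 * backwardMehler n x (-τ) * gaussDensity n x) ≤
        C₁ * τ ^ (2 * K) := by
  set L := log (1 + 1 / (8 * (A + π)))
  set D := 2 * C₀ ^ 2 + B₀ ^ 2 / (T₁ / 2) ^ (2 * K)
  refine ⟨8 ^ (n / 2 : ℝ) * (D * (2 * K).factorial * 32 ^ (2 * K) + 2 * C₀ ^ 2),
    by positivity, fun τ hτ hτT₀ ↦ ?_⟩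
  have hτL : 2 * τ < L := by linarith [min_le_left L T₁]
  have hτT₁ : τ < T₁ / 2 := by linarith [min_le_right L T₁]
  have hs := mul_exp_sub_one_lt_of_lt_log (by positivity) hτL
  have hs₀ : 0 < rexp (2 * τ) - 1 := by rw [sub_pos, one_lt_exp_iff]; linarith
  have hE : rexp (2 * τ) ≤ 2 := by nlinarith [pi_gt_three]
  have hs4τ : rexp (2 * τ) - 1 ≤ 4 * τ := by nlinarith [exp_sub_one_le_mul_exp (2 * τ)]
  have hsmall (x) (hx : ‖x‖ ^ 2 ≤ T₁ / 2) :
      |v x (-τ)| ≤ C₀ * (‖x‖ ^ (2 * K) + τ ^ K) := by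
    simpa [abs_of_pos hτ] using hvanish x (-τ) (by rw [abs_neg, abs_of_pos hτ]; linarith)
  have hlarge (x) : |v x (-τ)| ≤ B₀ * rexp (A * ‖x‖ ^ 2) :=
    hgrowth x (-τ) ⟨by linarith, by linarith⟩
  refine (integral_sq_mul_backwardMehler_mul_gaussDensity_le n K hτ (half_pos hT₁)
    (by nlinarith [pi_pos]) hsmall hlarge).trans ?_
  calc _ ≤ 8 ^ (n / 2 : ℝ) * (D * ((2 * K).factorial * (8 * (4 * τ)) ^ (2 * K)) +
        2 * C₀ ^ 2 * τ ^ (2 * K)) := by gcongr; linarith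
    _ = _ := by ring

theorem vanishing_order_H_bound (n : ℕ) (T T₁ A B₀ C₀ : ℝ) (K : ℕ)
    (hT : 0 < T) (hT₁ : 0 < T₁) (hT₁T : T₁ < T) (hA : 0 < A) (hB : 0 < B₀)
    (hC₀ : 0 < C₀) (hK : 0 < K)
    (v : EuclideanSpace ℝ (Fin n) → ℝ → ℝ)
    (hgrowth : ∀ x, ∀ t ∈ Set.Icc (-(1 / 2 * min (Real.log (1 + 1 / (8 * (A + Real.pi)))) T₁)) 0,
      |v x t| ≤ B₀ * Real.exp (A * ‖x‖ ^ 2))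
    (hvanish : ∀ x t, ‖x‖ ^ 2 + |t| ≤ T₁ → |v x t| ≤ C₀ * (‖x‖ ^ (2 * K) + |t| ^ K)) :
    ∃ C₁ > 0, ∀ τ : ℝ, 0 < τ →
      τ < 1 / 2 * min (Real.log (1 + 1 / (8 * (A + Real.pi)))) T₁ →
      (∫ x, v x (-τ) ^ 2 * backwardMehler n x (-τ) * gaussDensity n x) ≤
        C₁ * τ ^ (2 * K) :=
  vanishing_order_H_bound_general n T₁ A B₀ C₀ K hT₁ hA hC₀ v hgrowth hvanish
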